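/- For every positive integer L, G_{L,1}(q) = H_{L,1}(q)/(1−q^L), where G_{L,1}(q) = q/(q;q)_{L+1} − Σ_{n≥1} (q^{2n}/(1−q^n))·C(L+n−1,n−1)_q and H_{L,1}(q) = q/((q;q)_{L−1}(1−q^{L+1})) − (1/(q²;q)_L − 1). -/

import Mathlib

open PowerSeries

/-- `(q^s; q)_n` as a formal power series in `q = X` over `ℚ`. -/
noncomputable def qp (s n : ℕ) : PowerSeries ℚ :=
  ∏ i ∈ Finset.range n, (1 - (X : PowerSeries ℚ) ^ (s + i))

/-- The Gaussian binomial coefficient `C(m, k)_q = (q;q)_m / ((q;q)_k (q;q)_{m-k})`. -/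
noncomputable def gb (m k : ℕ) : PowerSeries ℚ := qp 1 m * (qp 1 k)⁻¹ * (qp 1 (m - k))⁻¹

/-
Each summand of `G_{L,1}` is `q^{2n} C(L+n-1, n)_q / (1 - q^L)`, since
`C(L+n-1, n-1)_q / (1 - q^n) = C(L+n-1, n)_q / (1 - q^L)`. By the `q`-binomial theorem
`∑_{n ≥ 0} C(L+n-1, n)_q z^n = 1/(z;q)_L` at `z = q^2`, these summands add up to
`(1/(q^2;q)_L - 1)/(1 - q^L)`, while `(q;q)_{L+1} = (q;q)_{L-1} (1 - q^L)(1 - q^{L+1})` takes care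
of the first term. The `q`-binomial theorem holds modulo `q^{sM}` for the partial sums of length `M`
at `z = q^s`, by induction on `L` using the `q`-Pascal rule.
-/

namespace QBinomial

lemma constantCoeff_one_sub_X_pow {R : Type*} [Ring R] {j : ℕ} (hj : j ≠ 0) :
    constantCoeff (1 - (X : PowerSeries R) ^ j) = 1 := by
  simp [zero_pow hj]

lemma one_sub_X_pow_mul_inv {j : ℕ} (hj : j ≠ 0) :
    (1 - (X : PowerSeries ℚ) ^ j) * (1 - X ^ j)⁻¹ = 1 :=
  PowerSeries.mul_inv_cancel _ (by simp [constantCoeff_one_sub_X_pow hj])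

lemma constantCoeff_qp {s : ℕ} (hs : s ≠ 0) (n : ℕ) : constantCoeff (qp s n) = 1 := by
  rw [qp, map_prod]
  exact Finset.prod_eq_one fun i _ => constantCoeff_one_sub_X_pow (by omega)

lemma qp_succ (s n : ℕ) : qp s (n + 1) = qp s n * (1 - X ^ (s + n)) :=
  Finset.prod_range_succ _ _

lemma qp_zero (s : ℕ) : qp s 0 = 1 := Finset.prod_range_zero _

lemma gb_self (m : ℕ) : gb m m = 1 := by
  rw [gb, Nat.sub_self, qp_zero, inv_one, mul_one,
    PowerSeries.mul_inv_cancel _ (by simp [constantCoeff_qp one_ne_zero])]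

lemma gb_zero (m : ℕ) : gb m 0 = 1 := by
  simpa [gb, qp_zero] using gb_self m

lemma inv_one_sub_X_pow_mul_gb (m k : ℕ) :
    (1 - (X : PowerSeries ℚ) ^ (k + 1))⁻¹ * gb (m + k + 1) k
      = gb (m + k + 1) (k + 1) * (1 - X ^ (m + 1))⁻¹ := by
  rw [gb, gb, show m + k + 1 - k = m + 1 by omega, show m + k + 1 - (k + 1) = m by omega,
    qp_succ 1 k, qp_succ 1 m, PowerSeries.mul_inv_rev, PowerSeries.mul_inv_rev, add_comm 1 k,
    add_comm 1 m]
  ring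

lemma gb_pascal (c b : ℕ) :
    gb (c + b + 2) (b + 1)
      = gb (c + b + 1) (b + 1) + (X : PowerSeries ℚ) ^ (c + 1) * gb (c + b + 1) b := by
  rw [gb, gb, gb, show c + b + 2 - (b + 1) = c + 1 by omega,
    show c + b + 1 - (b + 1) = c by omega, show c + b + 1 - b = c + 1 by omega,
    qp_succ 1 (c + b + 1), qp_succ 1 b, qp_succ 1 c, PowerSeries.mul_inv_rev,
    PowerSeries.mul_inv_rev]
  have hb := one_sub_X_pow_mul_inv (j := 1 + b) (by omega)
  have hc := one_sub_X_pow_mul_inv (j := 1 + c) (by omega)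
  linear_combination (qp 1 (c + b + 1) * (qp 1 b)⁻¹ * (qp 1 c)⁻¹) *
    ((1 - X ^ (1 + b))⁻¹ * hc + X ^ (c + 1) * (1 - X ^ (1 + c))⁻¹ * hb)

/-- Partial sums of the `q`-binomial series `∑ₙ C(m+n, n)_q (q^s)^n = 1/(q^s;q)_{m+1}`. -/
noncomputable def qbinSum (s m M : ℕ) : PowerSeries ℚ :=
  ∑ n ∈ Finset.range M, X ^ (s * n) * gb (m + n) n

lemma qbinSum_succ (s m M : ℕ) :
    qbinSum s m (M + 1) = qbinSum s m M + X ^ (s * M) * gb (m + M) M :=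
  Finset.sum_range_succ _ _

lemma qbinSum_succ_eq_one_add (s m N : ℕ) :
    qbinSum s m (N + 1) = 1 + ∑ n ∈ Finset.Icc 1 N, X ^ (s * n) * gb (m + n) n := by
  rw [qbinSum, Finset.sum_range_eq_add_Ico _ (by omega : 0 < N + 1),
    Finset.Ico_add_one_right_eq_Icc, mul_zero, pow_zero, add_zero, gb_zero, one_mul]

lemma qbinSum_succ_succ (s m M : ℕ) :
    qbinSum s (m + 1) (M + 1) = qbinSum s m (M + 1) + X ^ (s + m + 1) * qbinSum s (m + 1) M := by
  have hpascal : ∀ n ∈ Finset.range M,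
      X ^ (s * (n + 1)) * gb (m + 1 + (n + 1)) (n + 1)
        = X ^ (s * (n + 1)) * gb (m + (n + 1)) (n + 1)
          + X ^ (s + m + 1) * (X ^ (s * n) * gb (m + 1 + n) n) := by
    intro n _
    rw [show m + 1 + (n + 1) = m + n + 2 by omega, show m + (n + 1) = m + n + 1 by omega,
      show m + 1 + n = m + n + 1 by omega, gb_pascal]
    ring
  rw [qbinSum, qbinSum, qbinSum, Finset.sum_range_succ', Finset.sum_range_succ',
    Finset.sum_congr rfl hpascal, Finset.sum_add_distrib, Finset.mul_sum]
  simp only [mul_zero, pow_zero, gb_zero]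
  ring

lemma X_pow_dvd_one_sub_qp_mul_qbinSum (s m M : ℕ) :
    (X : PowerSeries ℚ) ^ (s * M) ∣ 1 - qp s (m + 1) * qbinSum s m M := by
  induction m generalizing M with
  | zero =>
    have hsum : qbinSum s 0 M = ∑ n ∈ Finset.range M, (X ^ s) ^ n := by
      simp only [qbinSum, zero_add, gb_self, mul_one, pow_mul]
    rw [hsum, qp_succ, qp_zero, one_mul, add_zero, mul_neg_geom_sum, sub_sub_cancel, pow_mul]
  | succ m ih =>
    cases M with
    | zero => simp
    | succ M =>
      have key : 1 - qp s (m + 1 + 1) * qbinSum s (m + 1) (M + 1)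
          = (1 - qp s (m + 1) * qbinSum s m (M + 1))
            + X ^ (s * (M + 1)) * (X ^ (m + 1) * qp s (m + 1) * gb (m + 1 + M) M) := by
        rw [qp_succ s (m + 1)]
        linear_combination (-qp s (m + 1)) * qbinSum_succ_succ s m M
          + (qp s (m + 1) * X ^ (s + m + 1)) * qbinSum_succ s (m + 1) M
      rw [key]
      exact dvd_add (ih (M + 1)) (dvd_mul_right _ _)

lemma X_pow_dvd_inv_qp_sub_qbinSum {s : ℕ} (hs : s ≠ 0) (m M : ℕ) :
    (X : PowerSeries ℚ) ^ (s * M) ∣ (qp s (m + 1))⁻¹ - qbinSum s m M := by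
  convert dvd_mul_of_dvd_right (X_pow_dvd_one_sub_qp_mul_qbinSum s m M) (qp s (m + 1))⁻¹ using 1
  rw [mul_sub, mul_one, ← mul_assoc,
    PowerSeries.inv_mul_cancel _ (by simp [constantCoeff_qp hs]), one_mul]

lemma coeff_mul_eq_of_X_pow_dvd_sub {R : Type*} [CommRing R] {f g : PowerSeries R} {N : ℕ}
    (h : X ^ (N + 1) ∣ f - g) (u : PowerSeries R) : coeff N (f * u) = coeff N (g * u) := by
  have := X_pow_dvd_iff.mp (dvd_mul_of_dvd_left h u) N N.lt_succ_self
  rwa [sub_mul, map_sub, sub_eq_zero] at this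

end QBinomial

open QBinomial in
/-- The terms with `n > N` of the series in `G_{L,1}` do not contribute to the coefficient of
`q^N`. -/
theorem stmt15 (L : ℕ) (hL : 1 ≤ L) (N : ℕ) :
    coeff N ((X : PowerSeries ℚ) * (qp 1 (L + 1))⁻¹)
        - (∑ n ∈ Finset.Icc 1 N,
            coeff N ((X : PowerSeries ℚ) ^ (2 * n) * (1 - X ^ n)⁻¹ * gb (L + n - 1) (n - 1)))
      = coeff N
          (((X : PowerSeries ℚ) * (qp 1 (L - 1) * (1 - X ^ (L + 1)))⁻¹ - ((qp 2 L)⁻¹ - 1))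
            * (1 - (X : PowerSeries ℚ) ^ L)⁻¹) := by
  obtain ⟨m, rfl⟩ := Nat.exists_eq_add_of_le' hL
  have hfirst : (X : PowerSeries ℚ) * (qp 1 (m + 1 + 1))⁻¹
      = X * (qp 1 (m + 1 - 1) * (1 - X ^ (m + 1 + 1)))⁻¹ * (1 - X ^ (m + 1))⁻¹ := by
    rw [Nat.add_sub_cancel, qp_succ, qp_succ, PowerSeries.mul_inv_rev, PowerSeries.mul_inv_rev,
      PowerSeries.mul_inv_rev, add_comm 1 m, add_comm 1 (m + 1)]
    ring
  have hterms : ∀ n ∈ Finset.Icc 1 N,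
      coeff N ((X : PowerSeries ℚ) ^ (2 * n) * (1 - X ^ n)⁻¹ * gb (m + 1 + n - 1) (n - 1))
        = coeff N (X ^ (2 * n) * gb (m + n) n * (1 - X ^ (m + 1))⁻¹) := by
    intro n hn
    obtain ⟨k, rfl⟩ : ∃ k, n = k + 1 := ⟨n - 1, by grind⟩
    rw [show m + 1 + (k + 1) - 1 = m + k + 1 by omega, Nat.add_sub_cancel, mul_assoc,
      inv_one_sub_X_pow_mul_gb, show m + (k + 1) = m + k + 1 by omega, mul_assoc]
  have htail : coeff N (((qp 2 (m + 1))⁻¹ - 1) * (1 - X ^ (m + 1))⁻¹)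
      = coeff N
          ((∑ n ∈ Finset.Icc 1 N, X ^ (2 * n) * gb (m + n) n) * (1 - X ^ (m + 1))⁻¹) := by
    have hN : N + 1 ≤ 2 * (N + 1) := by omega
    refine coeff_mul_eq_of_X_pow_dvd_sub ((pow_dvd_pow X hN).trans ?_) _
    convert X_pow_dvd_inv_qp_sub_qbinSum two_ne_zero m (N + 1) using 1
    rw [qbinSum_succ_eq_one_add]
    ring
  rw [hfirst, sub_mul, map_sub, htail, Finset.sum_congr rfl hterms, Finset.sum_mul, map_sum]
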